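/- arXiv:2305.05878 — 3 statements merged into one kernel-verified Lean document; each statement's English description precedes it below -/
import Mathlib

section
/- Let G be a simple graph of order n > 1 and size m, and let Ḡ denote its complement (which has n vertices and n(n-1)/2 - m edges). If m·M1(G) > n·M2(G), then (n(n-1)/2 - m)·M1(Ḡ) < n·M2(Ḡ). -/
/-- Degree of a vertex (classical, so it works for any graph on a finite vertex type). -/
noncomputable def gdeg {V : Type*} [Fintype V] (G : SimpleGraph V) (v : V) : ℕ := by
  classical exact G.degree v

/-- First Zagreb index: sum of squares of the vertex degrees. -/
noncomputable def zagrebM1 {V : Type*} [Fintype V] (G : SimpleGraph V) : ℕ :=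
  ∑ v, gdeg G v ^ 2

/-- Second Zagreb index: sum of d(u)·d(v) over the edges uv. -/
noncomputable def zagrebM2 {V : Type*} [Fintype V] (G : SimpleGraph V) : ℕ := by
  classical exact
    ∑ e ∈ G.edgeFinset,
      Sym2.lift ⟨fun u v => gdeg G u * gdeg G v, fun u v => by simp [Nat.mul_comm]⟩ e

/-- The size (number of edges) of a graph. -/
noncomputable def gsize {V : Type*} [Fintype V] (G : SimpleGraph V) : ℕ := by
  classical exact G.edgeFinset.card

/-- A graph is `r`-regular if every vertex has degree `r`. -/
def gregOfDeg {V : Type*} [Fintype V] (G : SimpleGraph V) (r : ℕ) : Prop :=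
  ∀ v, gdeg G v = r

/-- A graph is regular if all its vertices have the same degree. -/
def gregular {V : Type*} [Fintype V] (G : SimpleGraph V) : Prop :=
  ∃ r, gregOfDeg G r

open Finset

private lemma gdeg_eq {V : Type*} [Fintype V] (G : SimpleGraph V) (v : V)
    [Fintype (G.neighborSet v)] : gdeg G v = G.degree v := by
  unfold gdeg; congr!

private lemma gsize_eq {V : Type*} [Fintype V] (G : SimpleGraph V)
    [Fintype G.edgeSet] : gsize G = #G.edgeFinset := by
  unfold gsize; congr!

private lemma zagrebM2_eq {V : Type*} [Fintype V] (G : SimpleGraph V) [Fintype G.edgeSet] :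
    zagrebM2 G = ∑ e ∈ G.edgeFinset,
      Sym2.lift ⟨fun u v => gdeg G u * gdeg G v, fun u v => by simp [Nat.mul_comm]⟩ e := by
  unfold zagrebM2; congr!

open scoped Classical in
private lemma sum_dart_edge' {V : Type*} [Fintype V] (G : SimpleGraph V) (f : Sym2 V → ℕ) :
    ∑ d : G.Dart, f d.edge = 2 * ∑ e ∈ G.edgeFinset, f e := by
  rw [← Finset.sum_fiberwise_of_maps_to (g := SimpleGraph.Dart.edge)
      (t := G.edgeFinset) (fun d _ => by simp [SimpleGraph.Dart.edge_mem])]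
  rw [Finset.mul_sum]
  refine Finset.sum_congr rfl fun e he => ?_
  have hcard : #({d : G.Dart | d.edge = e} : Finset _) = 2 :=
    G.dart_edge_fiber_card e (by rwa [← SimpleGraph.mem_edgeFinset])
  calc ∑ d ∈ ({d : G.Dart | d.edge = e} : Finset _), f d.edge
      = ∑ d ∈ ({d : G.Dart | d.edge = e} : Finset _), f e := by
        refine Finset.sum_congr rfl fun d hd => ?_
        simp only [Finset.mem_filter] at hd
        rw [hd.2]
    _ = 2 * f e := by rw [Finset.sum_const, hcard]; ring

open scoped Classical in
private lemma sum_dart_nbr' {V : Type*} [Fintype V] (G : SimpleGraph V) (F : V → V → ℕ) :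
    ∑ d : G.Dart, F d.fst d.snd = ∑ v, ∑ u ∈ G.neighborFinset v, F v u := by
  have h1 : ∑ d : G.Dart, F d.fst d.snd
      = ∑ p ∈ (univ.filter fun p : V × V => G.Adj p.1 p.2), F p.1 p.2 := by
    refine Finset.sum_bij' (fun d _ => d.toProd) (fun p hp => ⟨p, (mem_filter.1 hp).2⟩)
      ?_ ?_ ?_ ?_ ?_ <;> intros <;> simp_all
  rw [h1, Finset.sum_filter, Fintype.sum_prod_type]
  refine Finset.sum_congr rfl fun v _ => ?_
  rw [SimpleGraph.neighborFinset_eq_filter, Finset.sum_filter]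

open scoped Classical in
private lemma two_mul_M2' {V : Type*} [Fintype V] (G : SimpleGraph V) :
    2 * zagrebM2 G = ∑ v, ∑ u ∈ G.neighborFinset v, gdeg G u * gdeg G v := by
  have h := sum_dart_edge' G
    (Sym2.lift ⟨fun u v => gdeg G u * gdeg G v, fun u v => by simp [Nat.mul_comm]⟩)
  have h2 := sum_dart_nbr' G (fun v u => gdeg G u * gdeg G v)
  rw [zagrebM2_eq, ← h, ← h2]
  refine Finset.sum_congr rfl fun d _ => ?_
  have hde : d.edge = s(d.fst, d.snd) := rfl
  rw [hde, Sym2.lift_mk]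
  exact Nat.mul_comm _ _

open scoped Classical in
private lemma nbr_swap' {V : Type*} [Fintype V] (G : SimpleGraph V) (f : V → ℤ) :
    ∑ v, ∑ u ∈ G.neighborFinset v, f u = ∑ v, (gdeg G v : ℤ) * f v := by
  simp only [SimpleGraph.neighborFinset_eq_filter, Finset.sum_filter]
  rw [Finset.sum_comm]
  refine Finset.sum_congr rfl fun v _ => ?_
  have h0 : ∑ u, (if G.Adj u v then f v else 0) = ∑ u ∈ univ.filter (G.Adj · v), f v := by
    rw [Finset.sum_filter]
  rw [h0, Finset.sum_const, nsmul_eq_mul]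
  have hfe : (univ.filter (G.Adj · v)) = G.neighborFinset v := by
    ext u
    simp [SimpleGraph.mem_neighborFinset, SimpleGraph.adj_comm]
  rw [hfe]
  have h1 : #(G.neighborFinset v) = G.degree v := rfl
  rw [h1, gdeg_eq]

open scoped Classical in
private lemma compl_nbrFinset' {V : Type*} [Fintype V] (G : SimpleGraph V) (v : V) :
    Gᶜ.neighborFinset v = univ \ insert v (G.neighborFinset v) := by
  ext u
  simp only [SimpleGraph.mem_neighborFinset, SimpleGraph.compl_adj, mem_sdiff, mem_univ,
    mem_insert, true_and]
  constructor
  · rintro ⟨hne, hna⟩; push_neg; exact ⟨fun h => hne h.symm, hna⟩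
  · rintro h; push_neg at h; exact ⟨fun h' => h.1 h'.symm, h.2⟩

private lemma sum_nbr_norm {V : Type*} [Fintype V] (G : SimpleGraph V) (v : V)
    [Fintype (G.neighborSet v)] {i1 : Fintype (G.neighborSet v)} (f : V → ℤ) :
    ∑ u ∈ @SimpleGraph.neighborFinset V G v i1, f u = ∑ u ∈ G.neighborFinset v, f u := by
  congr!

set_option maxHeartbeats 1000000 in
open scoped Classical in
private theorem stmt_0_aux {V : Type*} [Fintype V] (G : SimpleGraph V) (n m : ℕ)
    (hn : n = Fintype.card V) (hn1 : 1 < n) (hm : m = gsize G)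
    (h : m * zagrebM1 G > n * zagrebM2 G) :
    (n * (n - 1) / 2 - m) * zagrebM1 Gᶜ < n * zagrebM2 Gᶜ := by
  set mc : ℕ := gsize Gᶜ with hmc
  -- complement degree
  have hdegc : ∀ v, gdeg Gᶜ v + gdeg G v = n - 1 := by
    intro v
    have h1 : Gᶜ.degree v = Fintype.card V - 1 - G.degree v := SimpleGraph.degree_compl G v
    have h2 : G.degree v < Fintype.card V := G.degree_lt_card_verts v
    have h3 : gdeg G v = G.degree v := gdeg_eq G v
    have h4 : gdeg Gᶜ v = Gᶜ.degree v := gdeg_eq Gᶜ v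
    have h5 : G.degree v ≤ Fintype.card V - 1 := by omega
    omega
  -- handshake for G and Gᶜ
  have hhG : ∑ v, gdeg G v = 2 * m := by
    rw [hm, gsize_eq]
    rw [Finset.sum_congr rfl fun v _ => gdeg_eq G v]
    exact G.sum_degrees_eq_twice_card_edges
  have hhGc : ∑ v, gdeg Gᶜ v = 2 * mc := by
    rw [hmc, gsize_eq]
    rw [Finset.sum_congr rfl fun v _ => gdeg_eq Gᶜ v]
    exact Gᶜ.sum_degrees_eq_twice_card_edges
  have hsum : 2 * m + 2 * mc = n * (n - 1) := by
    have hs : ∑ v, (gdeg Gᶜ v + gdeg G v) = ∑ v : V, (n - 1) :=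
      Finset.sum_congr rfl fun v _ => hdegc v
    rw [Finset.sum_add_distrib, hhG, hhGc, Finset.sum_const, card_univ, ← hn,
      smul_eq_mul] at hs
    omega
  have hsub : n * (n - 1) / 2 - m = mc := by omega
  rw [hsub]
  -- pass to ℤ
  set d : V → ℤ := fun v => (gdeg G v : ℤ) with hd
  set k : ℤ := (n : ℤ) - 1 with hk
  have hdc : ∀ v, (gdeg Gᶜ v : ℤ) = k - d v := by
    intro v
    have h1 := hdegc v
    have h2 : gdeg Gᶜ v + gdeg G v = n - 1 := h1
    simp only [hd, hk]
    omega
  set A : ℤ := ∑ v, d v with hA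
  set B : ℤ := ∑ v, d v ^ 2 with hB
  set e : V → ℤ := fun v => ∑ u ∈ G.neighborFinset v, d u with he
  have hAm : A = 2 * (m : ℤ) := by
    simp only [hA, hd]
    exact_mod_cast hhG
  have hBM1 : B = (zagrebM1 G : ℤ) := by
    simp only [hB, hd]
    have : zagrebM1 G = ∑ v, gdeg G v ^ 2 := rfl
    rw [this]
    push_cast
    rfl
  have hM1cast : (zagrebM1 Gᶜ : ℤ) = ∑ v, ((gdeg Gᶜ v : ℤ)) ^ 2 := by
    have : zagrebM1 Gᶜ = ∑ v, gdeg Gᶜ v ^ 2 := rfl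
    rw [this]
    push_cast
    rfl
  -- sum of e
  have hsume : ∑ v, e v = B := by
    simp only [he, hB]
    rw [nbr_swap' G (fun v => d v)]
    exact Finset.sum_congr rfl fun v _ => by simp only [hd]; ring
  -- 2*M2 of G
  have h2M2 : 2 * (zagrebM2 G : ℤ) = ∑ v, e v * d v := by
    have ht := two_mul_M2' G
    have hc := congrArg (fun x : ℕ => (x : ℤ)) ht
    push_cast at hc
    rw [hc]
    refine Finset.sum_congr rfl fun v _ => ?_
    simp only [he, hd, Finset.sum_mul]
  -- neighbor sums in the complement
  have hnbrc : ∀ v, ∑ u ∈ Gᶜ.neighborFinset v, (gdeg Gᶜ u : ℤ)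
      = (2 * (mc : ℤ)) - (k - d v) - (k * d v - e v) := by
    intro v
    have hpart : ∑ u ∈ Gᶜ.neighborFinset v, (gdeg Gᶜ u : ℤ)
        = (∑ u, (gdeg Gᶜ u : ℤ))
          - ((gdeg Gᶜ v : ℤ) + ∑ u ∈ G.neighborFinset v, (gdeg Gᶜ u : ℤ)) := by
      rw [compl_nbrFinset' G v, Finset.sum_sdiff_eq_sub (Finset.subset_univ _),
        Finset.sum_insert (G.notMem_neighborFinset_self v)]
    rw [hpart]
    have h1 : ∑ u, (gdeg Gᶜ u : ℤ) = 2 * (mc : ℤ) := by exact_mod_cast hhGc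
    have h2 : ∑ u ∈ G.neighborFinset v, (gdeg Gᶜ u : ℤ) = k * d v - e v := by
      rw [Finset.sum_congr rfl fun u _ => hdc u, Finset.sum_sub_distrib, Finset.sum_const]
      have he2 : ∑ u ∈ G.neighborFinset v, d u = e v := by simp only [he]
      have hcardN : #(G.neighborFinset v) = G.degree v := rfl
      rw [he2, hcardN, nsmul_eq_mul]
      have h3 : ((G.degree v : ℤ)) = d v := by simp only [hd, gdeg_eq]
      rw [h3]
      ring
    rw [h1, h2, hdc v]
    ring
  -- 2 * M2 of the complement
  have h2M2c : 2 * (zagrebM2 Gᶜ : ℤ)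
      = ∑ v, (k - d v) * ((2 * (mc : ℤ)) - (k - d v) - (k * d v - e v)) := by
    have ht := two_mul_M2' Gᶜ
    have hc := congrArg (fun x : ℕ => (x : ℤ)) ht
    push_cast at hc
    have hc2 : 2 * (zagrebM2 Gᶜ : ℤ)
        = ∑ v, ∑ u ∈ Gᶜ.neighborFinset v, ((gdeg Gᶜ u : ℤ)) * ((gdeg Gᶜ v : ℤ)) := by
      rw [hc]; congr!
    rw [hc2]
    refine Finset.sum_congr rfl fun v _ => ?_
    rw [← Finset.sum_mul, hdc v, hnbrc v]
    ring
  -- expand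
  have hexp : 2 * (zagrebM2 Gᶜ : ℤ)
      = (n : ℤ) * (k * (2 * (mc : ℤ) - k)) + (-(2*(mc:ℤ)) + 2*k - k^2) * A + (k - 1) * B
        + k * B - 2 * (zagrebM2 G : ℤ) := by
    rw [h2M2c]
    have step : ∀ v : V, (k - d v) * ((2 * (mc : ℤ)) - (k - d v) - (k * d v - e v))
        = (k * (2 * (mc : ℤ) - k)) + (-(2*(mc:ℤ)) + 2*k - k^2) * d v + (k - 1) * d v ^ 2
          + k * e v - d v * e v := by
      intro v; ring
    rw [Finset.sum_congr rfl fun v _ => step v]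
    rw [h2M2]
    have hrw : ∀ v : V, (k * (2 * (mc : ℤ) - k)) + (-(2*(mc:ℤ)) + 2*k - k^2) * d v
          + (k - 1) * d v ^ 2 + k * e v - d v * e v
        = (k * (2 * (mc : ℤ) - k)) + ((-(2*(mc:ℤ)) + 2*k - k^2) * d v
          + ((k - 1) * d v ^ 2 + (k * e v - e v * d v))) := by
      intro v; ring
    rw [Finset.sum_congr rfl fun v _ => hrw v]
    rw [Finset.sum_add_distrib, Finset.sum_add_distrib, Finset.sum_add_distrib,
      Finset.sum_sub_distrib, Finset.sum_const, card_univ, ← hn, nsmul_eq_mul,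
      ← Finset.mul_sum, ← Finset.mul_sum, ← Finset.mul_sum, ← hA, ← hB, hsume]
    ring
  -- M1 of the complement
  have hM1c : (zagrebM1 Gᶜ : ℤ) = (n : ℤ) * k ^ 2 - 2 * k * A + B := by
    rw [hM1cast]
    have step : ∀ v : V, ((gdeg Gᶜ v : ℤ)) ^ 2 = k^2 + (-(2*k) * d v + d v ^ 2) := by
      intro v; rw [hdc v]; ring
    rw [Finset.sum_congr rfl fun v _ => step v]
    rw [Finset.sum_add_distrib, Finset.sum_add_distrib, ← Finset.mul_sum, ← hA, ← hB,
      Finset.sum_const, card_univ, ← hn, nsmul_eq_mul]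
    ring
  -- 2 * mc
  have h2mc : 2 * (mc : ℤ) = (n : ℤ) * k - A := by
    rw [hAm, hk]
    have hcast : ((2*m + 2*mc : ℕ) : ℤ) = ((n * (n-1) : ℕ) : ℤ) := by rw [hsum]
    push_cast at hcast
    have hc2 : ((n - 1 : ℕ) : ℤ) = (n : ℤ) - 1 := by omega
    rw [hc2] at hcast
    linarith
  -- Cauchy-Schwarz
  have hCS : A ^ 2 ≤ (n : ℤ) * B := by
    have hcs := sq_sum_le_card_mul_sum_sq (s := (univ : Finset V)) (f := d)
    rwa [card_univ, ← hn, ← hA, ← hB] at hcs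
  -- hypothesis in ℤ
  have hDz : (n : ℤ) * (zagrebM2 G : ℤ) < (m : ℤ) * B := by
    rw [hBM1]; exact_mod_cast h
  have hn2 : (2 : ℤ) ≤ (n : ℤ) := by exact_mod_cast hn1
  -- finish
  have hgoal2 : 2 * ((mc : ℤ) * (zagrebM1 Gᶜ : ℤ)) < 2 * ((n : ℤ) * (zagrebM2 Gᶜ : ℤ)) := by
    have h1 : 2 * ((mc : ℤ) * (zagrebM1 Gᶜ : ℤ))
        = (2 * (mc:ℤ)) * ((n : ℤ) * k ^ 2 - 2 * k * A + B) := by rw [hM1c]; ring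
    have key : 2 * ((n : ℤ) * (zagrebM2 Gᶜ : ℤ))
          - (2 * (mc:ℤ)) * ((n : ℤ) * k ^ 2 - 2 * k * A + B)
        = ((n:ℤ)-2) * ((n:ℤ)*B - A^2) + A*B - 2*(n:ℤ)*(zagrebM2 G : ℤ) := by
      have h2 : 2 * ((n : ℤ) * (zagrebM2 Gᶜ : ℤ)) = (n:ℤ) * (2 * (zagrebM2 Gᶜ : ℤ)) := by ring
      rw [h2, hexp, h2mc, hk]; ring
    have hprod : ((n : ℤ) - 2) * ((n : ℤ) * B - A ^ 2) ≥ 0 :=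
      mul_nonneg (by linarith) (by linarith)
    have hAB : A * B = 2 * ((m:ℤ) * B) := by rw [hAm]; ring
    linarith [key, h1, hprod, hDz, hAB]
  have hfin : ((mc : ℤ)) * (zagrebM1 Gᶜ : ℤ) < (n : ℤ) * (zagrebM2 Gᶜ : ℤ) := by linarith
  exact_mod_cast hfin

/-- If `G` has order `n > 1` and size `m` and `m·M1(G) > n·M2(G)`,
then for the complement, `(n(n-1)/2 - m)·M1(Ḡ) < n·M2(Ḡ)`. -/
theorem stmt_0 {V : Type*} [Fintype V] (G : SimpleGraph V) (n m : ℕ)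
    (hn : n = Fintype.card V) (hn1 : 1 < n) (hm : m = gsize G)
    (h : m * zagrebM1 G > n * zagrebM2 G) :
    (n * (n - 1) / 2 - m) * zagrebM1 Gᶜ < n * zagrebM2 Gᶜ :=
  stmt_0_aux G n m hn hn1 hm h
end

section
/- Let G be a simple graph of order n > 1 and size m that is irregular (i.e., not all vertex degrees of G are equal), and let Ḡ denote its complement. If m·M1(G) = n·M2(G), then (n(n-1)/2 - m)·M1(Ḡ) < n·M2(Ḡ). -/
/-!
Write `c = n - 1` and `d v` for the degrees of `G`; the degrees of `Gᶜ` are `c - d v` and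
`2 m̄ = n c - 2 m`, where `m̄ = n (n - 1) / 2 - m` is the size of `Gᶜ`. Expanding `M1(Gᶜ)`, and
`2 M2(Gᶜ)` as a sum over ordered pairs of distinct non-adjacent vertices, gives the identity
`2 (n M2(Gᶜ) - m̄ M1(Gᶜ)) = (n - 2) (n M1(G) - 4 m²) - 2 (n M2(G) - m M1(G))`.
The hypothesis kills the last term, and for an irregular graph `n ≥ 3` and, by the strict
Cauchy–Schwarz inequality `(∑ d)² < n ∑ d²`, `4 m² < n M1(G)`.
-/

open Finset SimpleGraph

theorem Finset.sum_sum_sub_sq {ι R : Type*} [CommRing R] (s : Finset ι) (f : ι → R) :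
    ∑ i ∈ s, ∑ j ∈ s, (f i - f j) ^ 2 = 2 * (#s * ∑ i ∈ s, f i ^ 2 - (∑ i ∈ s, f i) ^ 2) := by
  simp only [sub_sq, sum_add_distrib, sum_sub_distrib, sum_const, nsmul_eq_mul, ← mul_sum,
    ← sum_mul]
  ring

theorem sq_sum_lt_card_mul_sum_sq {ι R : Type*} [Fintype ι] [CommRing R] [LinearOrder R]
    [IsStrictOrderedRing R] {f : ι → R} {i j : ι} (hij : f i ≠ f j) :
    (∑ k, f k) ^ 2 < Fintype.card ι * ∑ k, f k ^ 2 := by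
  have hpos : 0 < ∑ k, ∑ l, (f k - f l) ^ 2 :=
    sum_pos' (fun _ _ => sum_nonneg fun _ _ => sq_nonneg _)
      ⟨i, mem_univ i, sum_pos' (fun _ _ => sq_nonneg _)
        ⟨j, mem_univ j, by have := sub_ne_zero.2 hij; positivity⟩⟩
  rw [sum_sum_sub_sq, card_univ] at hpos
  linarith

namespace SimpleGraph

variable {V M : Type*} [Fintype V] [AddCommMonoid M] (G : SimpleGraph V) [DecidableRel G.Adj]

theorem sum_darts_eq_sum_sum_neighborFinset (f : V → V → M) :
    ∑ d : G.Dart, f d.fst d.snd = ∑ u, ∑ v ∈ G.neighborFinset u, f u v := by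
  classical
  rw [← sum_fiberwise univ (fun d : G.Dart => d.fst)]
  refine sum_congr rfl fun u _ => ?_
  rw [dart_fst_fiber G u, sum_image fun _ _ _ _ h => G.dartOfNeighborSet_injective u h]
  exact (sum_subtype _ (fun v => G.mem_neighborFinset u v) (f u)).symm

theorem sum_darts_edge_eq_two_nsmul (f : Sym2 V → M) :
    ∑ d : G.Dart, f d.edge = 2 • ∑ e ∈ G.edgeFinset, f e := by
  classical
  rw [← sum_fiberwise_of_maps_to (t := G.edgeFinset) fun d _ => G.mem_edgeFinset.2 d.edge_mem,
    smul_sum]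
  refine sum_congr rfl fun e he => ?_
  rw [sum_congr rfl fun d hd => congrArg f (mem_filter.1 hd).2, sum_const,
    G.dart_edge_fiber_card e (G.mem_edgeFinset.1 he)]

theorem sum_sum_neighborFinset_left (g : V → M) :
    ∑ u, ∑ _v ∈ G.neighborFinset u, g u = ∑ u, G.degree u • g u := by
  simp only [sum_const, card_neighborFinset_eq_degree]

theorem sum_sum_neighborFinset_right (g : V → M) :
    ∑ u, ∑ v ∈ G.neighborFinset u, g v = ∑ u, G.degree u • g u := by
  rw [← sum_sum_neighborFinset_left]
  simp only [neighborFinset_eq_filter, sum_filter]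
  rw [sum_comm]
  simp only [adj_comm]

theorem sum_sum_neighborFinset_compl {A : Type*} [AddCommGroup A] [DecidableEq V]
    (f : V → V → A) :
    ∑ u, ∑ v ∈ Gᶜ.neighborFinset u, f u v
      = ∑ u, ∑ v, f u v - ∑ u, ∑ v ∈ G.neighborFinset u, f u v - ∑ u, f u u := by
  simp only [← sum_sub_distrib]
  refine sum_congr rfl fun u _ => ?_
  rw [neighborFinset_compl, sum_sdiff_eq_sub (by simp), sum_singleton,
    ← sum_compl_add_sum (G.neighborFinset u), add_sub_cancel_right]

end SimpleGraph

section Zagreb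

variable {V : Type*} [Fintype V] (G : SimpleGraph V)

theorem gdeg_eq_degree [DecidableRel G.Adj] (v : V) : gdeg G v = G.degree v := by
  unfold gdeg; congr!

theorem gsize_eq_card_edgeFinset [DecidableRel G.Adj] : gsize G = #G.edgeFinset := by
  unfold gsize; congr!

theorem two_mul_zagrebM2_eq_sum_sum_neighborFinset [DecidableRel G.Adj] :
    2 * zagrebM2 G = ∑ u, ∑ v ∈ G.neighborFinset u, G.degree u * G.degree v := by
  rw [← G.sum_darts_eq_sum_sum_neighborFinset, ← smul_eq_mul, zagrebM2]
  convert (G.sum_darts_edge_eq_two_nsmul _).symm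
  simp [Dart.edge, gdeg_eq_degree]

theorem sum_gdeg_eq_two_mul_gsize : ∑ v, gdeg G v = 2 * gsize G := by
  classical
  simp only [gdeg_eq_degree, gsize_eq_card_edgeFinset, sum_degrees_eq_twice_card_edges]

theorem gdeg_compl_add_gdeg (v : V) : gdeg Gᶜ v + gdeg G v = Fintype.card V - 1 := by
  classical
  have := G.degree_lt_card_verts v
  rw [gdeg_eq_degree, gdeg_eq_degree, degree_compl]
  omega

theorem gdeg_compl_eq (v : V) : (gdeg Gᶜ v : ℤ) = Fintype.card V - 1 - gdeg G v := by
  have := gdeg_compl_add_gdeg G v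
  have := Fintype.card_pos_iff.2 ⟨v⟩
  omega

theorem gsize_compl_eq : gsize Gᶜ = Fintype.card V * (Fintype.card V - 1) / 2 - gsize G := by
  have hsum : ∑ v, (gdeg Gᶜ v + gdeg G v) = Fintype.card V * (Fintype.card V - 1) := by
    simp only [gdeg_compl_add_gdeg, sum_const, card_univ, smul_eq_mul]
  rw [sum_add_distrib, sum_gdeg_eq_two_mul_gsize, sum_gdeg_eq_two_mul_gsize] at hsum
  omega

theorem two_mul_gsize_compl_eq :
    2 * (gsize Gᶜ : ℤ) = Fintype.card V * (Fintype.card V - 1 : ℤ) - 2 * gsize G := by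
  have hsum := sum_gdeg_eq_two_mul_gsize G
  have hsumc := sum_gdeg_eq_two_mul_gsize Gᶜ
  zify at hsum hsumc
  simp only [← hsum, ← hsumc, gdeg_compl_eq, sum_sub_distrib, sum_const, card_univ,
    nsmul_eq_mul]
  ring

theorem zagrebM1_compl_eq :
    (zagrebM1 Gᶜ : ℤ) = Fintype.card V * (Fintype.card V - 1 : ℤ) ^ 2
      - 4 * (Fintype.card V - 1 : ℤ) * gsize G + zagrebM1 G := by
  have hsum : ∑ v, (gdeg G v : ℤ) = 2 * gsize G := by exact_mod_cast sum_gdeg_eq_two_mul_gsize G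
  simp only [zagrebM1, Nat.cast_sum, Nat.cast_pow, gdeg_compl_eq, sub_sq, sum_add_distrib,
    sum_sub_distrib, sum_const, card_univ, nsmul_eq_mul, ← mul_sum, hsum]
  ring

theorem two_mul_zagrebM2_compl_eq :
    2 * (zagrebM2 Gᶜ : ℤ) = (2 * gsize Gᶜ) ^ 2
      - (2 * gsize G * (Fintype.card V - 1 : ℤ) ^ 2
          - 2 * (Fintype.card V - 1 : ℤ) * zagrebM1 G + 2 * zagrebM2 G)
      - zagrebM1 Gᶜ := by
  classical
  have hsum : ∑ v, (gdeg G v : ℤ) = 2 * gsize G := by exact_mod_cast sum_gdeg_eq_two_mul_gsize G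
  have hM2 := congrArg (Nat.cast (R := ℤ)) (two_mul_zagrebM2_eq_sum_sum_neighborFinset G)
  have hM2c := congrArg (Nat.cast (R := ℤ)) (two_mul_zagrebM2_eq_sum_sum_neighborFinset Gᶜ)
  push_cast [← gdeg_eq_degree] at hM2 hM2c
  have hsumc : ∑ v, (gdeg Gᶜ v : ℤ) = 2 * gsize Gᶜ := by
    exact_mod_cast sum_gdeg_eq_two_mul_gsize Gᶜ
  have hM1c : ∑ v, (gdeg Gᶜ v : ℤ) * gdeg Gᶜ v = zagrebM1 Gᶜ := by
    simp only [zagrebM1, Nat.cast_sum, sq, Nat.cast_mul]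
  have hM1 : ∑ v, (gdeg G v : ℤ) ^ 2 = zagrebM1 G := by
    simp only [zagrebM1, Nat.cast_sum, Nat.cast_pow]
  rw [hM2c, sum_sum_neighborFinset_compl, ← sum_mul_sum, hsumc, hM1c, ← sq]
  simp only [gdeg_compl_eq]
  set c : ℤ := Fintype.card V - 1
  have hnb : ∀ u v, (c - gdeg G u) * (c - gdeg G v)
      = c * (c - gdeg G u) - c * gdeg G v + gdeg G u * gdeg G v := fun _ _ => by ring
  simp only [hnb, sum_add_distrib, sum_sub_distrib]
  rw [sum_sum_neighborFinset_left G (fun u => c * (c - gdeg G u)),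
    sum_sum_neighborFinset_right G (fun v => c * gdeg G v), ← hM2, ← sum_sub_distrib]
  simp only [← gdeg_eq_degree, nsmul_eq_mul]
  have hdeg : ∀ u, (gdeg G u : ℤ) * (c * (c - gdeg G u)) - gdeg G u * (c * gdeg G u)
      = c ^ 2 * gdeg G u - 2 * c * gdeg G u ^ 2 := fun _ => by ring
  simp only [hdeg, sum_sub_distrib, ← mul_sum, hsum, hM1]
  ring

theorem two_mul_zagreb_compl_identity :
    2 * (Fintype.card V * (zagrebM2 Gᶜ : ℤ) - gsize Gᶜ * zagrebM1 Gᶜ)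
      = (Fintype.card V - 2) * (Fintype.card V * (zagrebM1 G : ℤ) - 4 * gsize G ^ 2)
        - 2 * (Fintype.card V * (zagrebM2 G : ℤ) - gsize G * zagrebM1 G) := by
  set n : ℤ := (Fintype.card V : ℤ)
  linear_combination n * two_mul_zagrebM2_compl_eq G
    + (n * (2 * gsize Gᶜ + (n * (n - 1) - 2 * gsize G)) - zagrebM1 Gᶜ) * two_mul_gsize_compl_eq G
    - (n + (n * (n - 1) - 2 * gsize G)) * zagrebM1_compl_eq G

end Zagreb

section Irregular

variable {V : Type*} [Fintype V] {G : SimpleGraph V}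

theorem exists_gdeg_ne_of_not_gregular (hG : ¬ gregular G) : ∃ a b, gdeg G a ≠ gdeg G b := by
  by_contra! hreg
  refine hG ?_
  cases isEmpty_or_nonempty V with
  | inl _ => exact ⟨0, isEmptyElim⟩
  | inr h => exact ⟨gdeg G h.some, fun v => hreg v h.some⟩

theorem four_mul_gsize_sq_lt_card_mul_zagrebM1 (hG : ¬ gregular G) :
    4 * gsize G ^ 2 < Fintype.card V * zagrebM1 G := by
  obtain ⟨a, b, hab⟩ := exists_gdeg_ne_of_not_gregular hG
  have := sq_sum_lt_card_mul_sum_sq (f := fun v => (gdeg G v : ℤ)) (Nat.cast_injective.ne hab)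
  have hsum : ∑ v, (gdeg G v : ℤ) = 2 * gsize G := by exact_mod_cast sum_gdeg_eq_two_mul_gsize G
  rw [hsum] at this
  zify [zagrebM1]
  linarith

theorem three_le_card_of_not_gregular (hG : ¬ gregular G) : 3 ≤ Fintype.card V := by
  classical
  obtain ⟨a, b, hab⟩ := exists_gdeg_ne_of_not_gregular hG
  have hne : a ≠ b := fun h => hab (h ▸ rfl)
  by_contra! hcard
  have hcard2 : Fintype.card V = 2 := by
    have := Fintype.one_lt_card_iff.2 ⟨a, b, hne⟩
    omega
  have huniv : (univ : Finset V) = {a, b} :=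
    (eq_of_subset_of_card_le (subset_univ _) (by rw [card_pair hne, card_univ, hcard2])).symm
  have hsum := sum_gdeg_eq_two_mul_gsize G
  rw [huniv, sum_pair hne] at hsum
  have ha := G.degree_lt_card_verts a
  have hb := G.degree_lt_card_verts b
  rw [← gdeg_eq_degree] at ha hb
  omega

end Irregular

theorem stmt_1_general {V : Type*} [Fintype V] (G : SimpleGraph V) (n m : ℕ)
    (hn : n = Fintype.card V) (hm : m = gsize G)
    (hirr : ¬ gregular G)
    (h : m * zagrebM1 G = n * zagrebM2 G) :
    (n * (n - 1) / 2 - m) * zagrebM1 Gᶜ < n * zagrebM2 Gᶜ := by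
  subst hn hm
  rw [← gsize_compl_eq]
  have hn3 : (3 : ℤ) ≤ Fintype.card V := by exact_mod_cast three_le_card_of_not_gregular hirr
  have hCS : (4 * gsize G ^ 2 : ℤ) < Fintype.card V * zagrebM1 G := by
    exact_mod_cast four_mul_gsize_sq_lt_card_mul_zagrebM1 hirr
  have hbalance : (gsize G * zagrebM1 G : ℤ) = Fintype.card V * zagrebM2 G := by exact_mod_cast h
  have hid := two_mul_zagreb_compl_identity G
  rw [hbalance, sub_self, mul_zero, sub_zero] at hid
  have hpos := mul_pos (by linarith : (0 : ℤ) < Fintype.card V - 2) (sub_pos.2 hCS)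
  zify
  linarith

/-- If `G` is an irregular graph of order `n > 1` and size `m` with
`m·M1(G) = n·M2(G)`, then `(n(n-1)/2 - m)·M1(Ḡ) < n·M2(Ḡ)`. -/
theorem stmt_1 {V : Type*} [Fintype V] (G : SimpleGraph V) (n m : ℕ)
    (hn : n = Fintype.card V) (hn1 : 1 < n) (hm : m = gsize G)
    (hirr : ¬ gregular G)
    (h : m * zagrebM1 G = n * zagrebM2 G) :
    (n * (n - 1) / 2 - m) * zagrebM1 Gᶜ < n * zagrebM2 Gᶜ :=
  stmt_1_general G n m hn hm hirr h
end

section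
/- Fix n > 3 and let 𝒢_n be the set of isomorphism classes of simple graphs on n vertices. Let A, C ⊆ 𝒢_n be the classes of graphs G of order n and size m satisfying m·M1(G) > n·M2(G) and m·M1(G) < n·M2(G), respectively. Then |A| < |C|. -/
/-- The setoid identifying isomorphic simple graphs on `Fin n`. -/
def graphIsoSetoid (n : ℕ) : Setoid (SimpleGraph (Fin n)) where
  r G H := Nonempty (G ≃g H)
  iseqv := ⟨fun _ => ⟨SimpleGraph.Iso.refl⟩,
    fun ⟨f⟩ => ⟨f.symm⟩, fun ⟨f⟩ ⟨g⟩ => ⟨f.trans g⟩⟩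

/-- `𝒢_n`: the type of isomorphism classes of simple graphs on `n` vertices. -/
def IsoClasses (n : ℕ) := Quotient (graphIsoSetoid n)

/-- The set of isomorphism classes of graphs on `n` vertices satisfying a predicate. -/
def isoClassesOf (n : ℕ) (P : SimpleGraph (Fin n) → Prop) : Set (IsoClasses n) :=
  Quotient.mk (graphIsoSetoid n) '' {G | P G}

/-!
Write `β(G) = n M₂ - m M₁`, so that `A` and `C` are the classes with `β < 0` and `β > 0`. If `B` is
the adjacency matrix and `d = B 1` the degree vector, then `2β = n ⟨d, B d⟩ - ⟨1, d⟩ ⟨d, d⟩`. The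
complement has adjacency matrix `J - I - B`, and expanding gives
`2 (β(Gᶜ) + β(G)) = (n - 2) (n M₁ - (2m)²)`, which is nonnegative by Cauchy–Schwarz. Hence
complementation, an involution of `𝒢_n`, maps `A` injectively into `C`. It misses the class of a
single edge, for which `β = n - 2` and `β(Gᶜ) = (n - 2)(n - 3)` are both positive when `n > 3`.
-/

open Finset Matrix

namespace Matrix

variable {V W R : Type*} [Fintype V] [Fintype W] [CommRing R]

def zagrebDefect (A : Matrix V V R) : R :=
  Fintype.card V * (A *ᵥ 1 ⬝ᵥ A *ᵥ A *ᵥ 1) - (1 ⬝ᵥ A *ᵥ 1) * (A *ᵥ 1 ⬝ᵥ A *ᵥ 1)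

theorem zagrebDefect_reindex (e : V ≃ W) (A : Matrix V V R) :
    zagrebDefect (reindex e e A) = zagrebDefect A := by
  have hmulVec (v : V → R) : reindex e e A *ᵥ (v ∘ e.symm) = (A *ᵥ v) ∘ e.symm := by
    simp [reindex_apply, submatrix_mulVec_equiv, Function.comp_assoc]
  have hdot (u v : V → R) : u ∘ e.symm ⬝ᵥ v ∘ e.symm = u ⬝ᵥ v := by
    simp [Function.comp_assoc]
  have hone : (1 : W → R) = (1 : V → R) ∘ e.symm := rfl
  simp only [zagrebDefect, hone, hmulVec, hdot, Fintype.card_congr e]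

theorem of_one_mulVec (v : V → R) : (of 1 : Matrix V V R) *ᵥ v = (1 ⬝ᵥ v) • 1 := by
  ext; simp [mulVec, dotProduct]

theorem IsSymm.dotProduct_mulVec_comm {A : Matrix V V R} (hA : A.IsSymm) (x y : V → R) :
    x ⬝ᵥ A *ᵥ y = y ⬝ᵥ A *ᵥ x := by
  rw [dotProduct_mulVec, ← mulVec_transpose, hA.eq, dotProduct_comm]

theorem zagrebDefect_of_one_sub_one_sub_add [DecidableEq V] {A : Matrix V V R} (hA : A.IsSymm) :
    zagrebDefect (of 1 - 1 - A) + zagrebDefect A =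
      (Fintype.card V - 2) * (Fintype.card V * (A *ᵥ 1 ⬝ᵥ A *ᵥ 1) - (1 ⬝ᵥ A *ᵥ 1) ^ 2) := by
  have hsymm := hA.dotProduct_mulVec_comm 1 (A *ᵥ 1)
  have hone : (1 : V → R) ⬝ᵥ 1 = Fintype.card V := by simp [dotProduct_one]
  simp only [zagrebDefect, sub_mulVec, of_one_mulVec, one_mulVec, mulVec_sub, mulVec_smul,
    dotProduct_sub, sub_dotProduct, dotProduct_smul, smul_dotProduct, smul_eq_mul, hone,
    dotProduct_comm _ (1 : V → R), hsymm]
  ring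

end Matrix

namespace SimpleGraph

variable {V W : Type*}

theorem adjMatrix_compl [DecidableEq V] (G : SimpleGraph V) [DecidableRel G.Adj] {R : Type*}
    [Ring R] : Gᶜ.adjMatrix R = of 1 - 1 - G.adjMatrix R := by
  ext u v
  by_cases huv : u = v
  · simp [huv]
  · by_cases h : G.Adj u v <;> simp [huv, h, one_apply]

def Iso.compl {G : SimpleGraph V} {H : SimpleGraph W} (φ : G ≃g H) : Gᶜ ≃g Hᶜ where
  toEquiv := φ.toEquiv
  map_rel_iff' := by simp [φ.injective.ne_iff, φ.map_adj_iff]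

theorem edgeFinset_edge {s t : V} [Fintype (edge s t).edgeSet] (hst : s ≠ t) :
    (edge s t).edgeFinset = {s(s, t)} := by
  ext; rw [mem_edgeFinset, edgeSet_edge_of_ne hst, Set.mem_singleton_iff, mem_singleton]

variable [Fintype V] [Fintype W]

section

variable (G : SimpleGraph V)

theorem sum_darts_eq_two_nsmul_sum_edgeFinset [DecidableRel G.Adj] [Fintype G.edgeSet]
    {M : Type*} [AddCommMonoid M] (f : Sym2 V → M) :
    ∑ d : G.Dart, f d.edge = 2 • ∑ e ∈ G.edgeFinset, f e := by
  classical
  rw [← sum_fiberwise_of_maps_to (g := Dart.edge) (t := G.edgeFinset)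
    fun d _ => mem_edgeFinset.2 d.edge_mem, smul_sum]
  refine sum_congr rfl fun e he => ?_
  rw [sum_congr rfl fun d hd => congrArg f (mem_filter.1 hd).2, sum_const,
    G.dart_edge_fiber_card e (mem_edgeFinset.1 he)]

theorem sum_adj_eq_two_nsmul_sum_edgeFinset [DecidableRel G.Adj] [Fintype G.edgeSet]
    {M : Type*} [AddCommMonoid M] (f : Sym2 V → M) :
    ∑ u, ∑ v, (if G.Adj u v then f s(u, v) else 0) = 2 • ∑ e ∈ G.edgeFinset, f e := by
  rw [← sum_darts_eq_two_nsmul_sum_edgeFinset, ← Fintype.sum_prod_type', ← sum_filter]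
  exact sum_bij' (fun p hp => ⟨p, (mem_filter.1 hp).2⟩) (fun d _ => d.toProd)
    (by simp) (by simp) (by simp) (by simp) (by simp)

theorem gdeg_eq_degree [DecidableRel G.Adj] (v : V) : gdeg G v = G.degree v := by
  unfold gdeg; convert rfl

theorem gsize_eq_card_edgeFinset [Fintype G.edgeSet] : gsize G = #G.edgeFinset := by
  unfold gsize; convert rfl

theorem zagrebM1_eq_sum_degree_sq [DecidableRel G.Adj] : zagrebM1 G = ∑ v, G.degree v ^ 2 := by
  simp only [zagrebM1, gdeg_eq_degree]

theorem zagrebM2_eq_sum_edgeFinset [Fintype G.edgeSet] :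
    zagrebM2 G = ∑ e ∈ G.edgeFinset,
      Sym2.lift ⟨fun u v => gdeg G u * gdeg G v, fun _ _ => Nat.mul_comm _ _⟩ e := by
  unfold zagrebM2; convert rfl

theorem two_mul_zagrebM2 [DecidableRel G.Adj] :
    2 * zagrebM2 G = ∑ u, ∑ v, if G.Adj u v then G.degree u * G.degree v else 0 := by
  rw [zagrebM2_eq_sum_edgeFinset, ← smul_eq_mul, ← sum_adj_eq_two_nsmul_sum_edgeFinset]
  simp only [Sym2.lift_mk, gdeg_eq_degree]

theorem adjMatrix_mulVec_one [DecidableRel G.Adj] {R : Type*} [NonAssocSemiring R] :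
    G.adjMatrix R *ᵥ 1 = fun v => (G.degree v : R) := by
  ext v; simp

noncomputable def zagrebBalance : ℤ := Fintype.card V * zagrebM2 G - gsize G * zagrebM1 G

theorem zagrebBalance_neg_iff :
    G.zagrebBalance < 0 ↔ Fintype.card V * zagrebM2 G < gsize G * zagrebM1 G := by
  rw [zagrebBalance, sub_neg]; norm_cast

theorem zagrebBalance_pos_iff :
    0 < G.zagrebBalance ↔ gsize G * zagrebM1 G < Fintype.card V * zagrebM2 G := by
  rw [zagrebBalance, sub_pos]; norm_cast

theorem zagrebDefect_adjMatrix [DecidableRel G.Adj] {R : Type*} [CommRing R] :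
    (G.adjMatrix R).zagrebDefect = 2 * (G.zagrebBalance : R) := by
  have hM2 := congrArg (Nat.cast : ℕ → R) G.two_mul_zagrebM2
  have hm := congrArg (Nat.cast : ℕ → R) G.sum_degrees_eq_twice_card_edges
  push_cast at hM2 hm
  rw [zagrebDefect, adjMatrix_mulVec_one, dotProduct_mulVec_adjMatrix, zagrebBalance,
    zagrebM1_eq_sum_degree_sq, gsize_eq_card_edgeFinset]
  simp only [dotProduct, Pi.one_apply, one_mul, ← sq]
  push_cast
  linear_combination -(Fintype.card V : R) * hM2 - (∑ v, (G.degree v : R) ^ 2) * hm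

theorem two_mul_zagrebBalance_compl_add :
    2 * (Gᶜ.zagrebBalance + G.zagrebBalance) =
      (Fintype.card V - 2) * (Fintype.card V * zagrebM1 G - (2 * gsize G) ^ 2) := by
  classical
  have h := zagrebDefect_of_one_sub_one_sub_add (G.isSymm_adjMatrix (α := ℤ))
  have hm := congrArg (Nat.cast : ℕ → ℤ) G.sum_degrees_eq_twice_card_edges
  push_cast at hm
  rw [← adjMatrix_compl, zagrebDefect_adjMatrix, zagrebDefect_adjMatrix, adjMatrix_mulVec_one]
    at h
  simp only [dotProduct, Pi.one_apply, one_mul, ← sq, hm] at h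
  rw [zagrebM1_eq_sum_degree_sq, gsize_eq_card_edgeFinset]
  push_cast
  linear_combination h

theorem sq_two_mul_gsize_le : (2 * gsize G) ^ 2 ≤ Fintype.card V * zagrebM1 G := by
  classical
  rw [gsize_eq_card_edgeFinset, ← sum_degrees_eq_twice_card_edges, zagrebM1_eq_sum_degree_sq]
  exact sq_sum_le_card_mul_sum_sq

theorem zagrebBalance_compl_pos (hV : 2 ≤ Fintype.card V) (h : G.zagrebBalance < 0) :
    0 < Gᶜ.zagrebBalance := by
  have hid := G.two_mul_zagrebBalance_compl_add
  have hCS : ((2 * gsize G) ^ 2 : ℤ) ≤ Fintype.card V * zagrebM1 G := by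
    exact_mod_cast G.sq_two_mul_gsize_le
  have hV' : (2 : ℤ) ≤ Fintype.card V := by exact_mod_cast hV
  nlinarith

end

theorem Iso.zagrebBalance_eq {G : SimpleGraph V} {H : SimpleGraph W} (φ : G ≃g H) :
    G.zagrebBalance = H.zagrebBalance := by
  classical
  have h := zagrebDefect_reindex (φ : V ≃ W) (G.adjMatrix ℤ)
  rw [Iso.reindex_adjMatrix, zagrebDefect_adjMatrix, zagrebDefect_adjMatrix, Int.cast_id,
    Int.cast_id] at h
  omega

section

variable {s t : V}

theorem gdeg_edge [DecidableEq V] (hst : s ≠ t) (v : V) :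
    gdeg (edge s t) v = if v = s ∨ v = t then 1 else 0 := by
  classical
  rw [gdeg_eq_degree, degree, neighborFinset_eq_filter]
  split_ifs with hv
  · rw [card_eq_one]
    rcases hv with rfl | rfl
    · exact ⟨t, by ext; aesop (add simp edge_adj)⟩
    · exact ⟨s, by ext; aesop (add simp edge_adj)⟩
  · rw [card_eq_zero, filter_eq_empty_iff]
    aesop (add simp edge_adj)

theorem gsize_edge (hst : s ≠ t) : gsize (edge s t) = 1 := by
  classical
  rw [gsize_eq_card_edgeFinset, edgeFinset_edge hst, card_singleton]

theorem zagrebM1_edge (hst : s ≠ t) : zagrebM1 (edge s t) = 2 := by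
  classical
  simp only [zagrebM1, gdeg_edge hst, apply_ite (· ^ 2), one_pow, zero_pow two_ne_zero, sum_boole,
    Nat.cast_id]
  rw [← card_pair hst]
  congr 1
  ext
  simp

theorem zagrebM2_edge (hst : s ≠ t) : zagrebM2 (edge s t) = 1 := by
  classical
  rw [zagrebM2_eq_sum_edgeFinset, edgeFinset_edge hst, sum_singleton, Sym2.lift_mk]
  simp [gdeg_edge hst]

theorem zagrebBalance_edge (hst : s ≠ t) : (edge s t).zagrebBalance = Fintype.card V - 2 := by
  simp [zagrebBalance, gsize_edge hst, zagrebM1_edge hst, zagrebM2_edge hst]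

theorem zagrebBalance_compl_edge (hst : s ≠ t) :
    (edge s t)ᶜ.zagrebBalance = (Fintype.card V - 2) * (Fintype.card V - 3) := by
  have h := (edge s t).two_mul_zagrebBalance_compl_add
  rw [zagrebBalance_edge hst, gsize_edge hst, zagrebM1_edge hst] at h
  push_cast at h
  linarith

end

end SimpleGraph

theorem Set.ncard_lt_ncard_of_involutive_mapsTo {α : Type*} [Finite α] {f : α → α}
    {S T : Set α} (hf : Function.Involutive f) (hST : Set.MapsTo f S T) {x : α} (hxT : x ∈ T)
    (hfx : f x ∉ S) : S.ncard < T.ncard := by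
  have hx : x ∉ f '' S := by
    rintro ⟨y, hyS, rfl⟩
    exact hfx (by rwa [hf y])
  rw [← Set.ncard_image_of_injective S hf.injective]
  exact Set.ncard_lt_ncard ⟨hST.image_subset, fun h => hx (h hxT)⟩

namespace IsoClasses

variable {n : ℕ}

instance : Finite (IsoClasses n) := by
  unfold IsoClasses; infer_instance

def mk (G : SimpleGraph (Fin n)) : IsoClasses n :=
  Quotient.mk (graphIsoSetoid n) G

@[elab_as_elim]
theorem ind {p : IsoClasses n → Prop} (h : ∀ G, p (mk G)) (x : IsoClasses n) : p x :=
  Quotient.ind h x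

def compl : IsoClasses n → IsoClasses n :=
  Quotient.map (fun G => Gᶜ) fun _ _ ⟨φ⟩ => ⟨φ.compl⟩

theorem compl_mk (G : SimpleGraph (Fin n)) : compl (mk G) = mk Gᶜ :=
  rfl

theorem compl_involutive : Function.Involutive (compl (n := n)) := by
  intro x
  induction x using ind with
  | h G => rw [compl_mk, compl_mk, compl_compl]

theorem mk_mem_isoClassesOf_zagrebBalance_iff (p : ℤ → Prop) (G : SimpleGraph (Fin n)) :
    mk G ∈ isoClassesOf n (fun H => p H.zagrebBalance) ↔ p G.zagrebBalance := by
  constructor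
  · rintro ⟨H, hH, hHG⟩
    obtain ⟨φ⟩ := Quotient.exact hHG
    rwa [← φ.zagrebBalance_eq]
  · exact fun h => ⟨G, h, rfl⟩

end IsoClasses

/-- For `n > 3`, with `A`, `C` the sets of isomorphism classes of
graphs of order `n` and size `m` satisfying `m·M1 > n·M2` and `m·M1 < n·M2`
respectively, one has `|A| < |C|`. -/
theorem stmt_11 (n : ℕ) (hn : 3 < n)
    (A : Set (IsoClasses n)) (C : Set (IsoClasses n))
    (hA : A = isoClassesOf n fun G => gsize G * zagrebM1 G > n * zagrebM2 G)
    (hC : C = isoClassesOf n fun G => gsize G * zagrebM1 G < n * zagrebM2 G) :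
    A.ncard < C.ncard := by
  have hA' : A = isoClassesOf n fun G => G.zagrebBalance < 0 := by
    simp only [hA, gt_iff_lt, SimpleGraph.zagrebBalance_neg_iff, Fintype.card_fin]
  have hC' : C = isoClassesOf n fun G => 0 < G.zagrebBalance := by
    simp only [hC, SimpleGraph.zagrebBalance_pos_iff, Fintype.card_fin]
  obtain ⟨s, t, hst⟩ : ∃ s t : Fin n, s ≠ t := ⟨⟨0, by omega⟩, ⟨1, by omega⟩, by simp⟩
  rw [hA', hC']
  refine Set.ncard_lt_ncard_of_involutive_mapsTo IsoClasses.compl_involutive ?_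
    (x := IsoClasses.mk (SimpleGraph.edge s t)) ?_ ?_
  · intro x hx
    induction x using IsoClasses.ind with
    | h G =>
      rw [IsoClasses.compl_mk, IsoClasses.mk_mem_isoClassesOf_zagrebBalance_iff (0 < ·)]
      exact G.zagrebBalance_compl_pos (by rw [Fintype.card_fin]; omega)
        ((IsoClasses.mk_mem_isoClassesOf_zagrebBalance_iff (· < 0) G).1 hx)
  · rw [IsoClasses.mk_mem_isoClassesOf_zagrebBalance_iff (0 < ·),
      SimpleGraph.zagrebBalance_edge hst, Fintype.card_fin]
    omega
  · rw [IsoClasses.compl_mk, IsoClasses.mk_mem_isoClassesOf_zagrebBalance_iff (· < 0),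
      SimpleGraph.zagrebBalance_compl_edge hst, Fintype.card_fin, not_lt]
    exact mul_nonneg (by omega) (by omega)
end
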